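/- Let G be a finite graph and Γ a subcollection of the set of maximum independent sets of G such that Γ−{S} is an hke collection for each S ∈ Γ. Then the integer m satisfying |⋂Γ₁ − ⋃Γ₂| − |⋂Γ₂ − ⋃Γ₁| = (−1)^{|Γ₁|+1}·m for all partitions {Γ₁,Γ₂} of Γ into non-empty subcollections is non-negative. -/

import Mathlib

open Finset

/-- Union of a finite collection of finite sets. -/
def collU {α : Type*} [DecidableEq α] (Γ : Finset (Finset α)) : Finset α :=
  Γ.sup id

/-- Intersection of a finite collection of finite sets
(equals the usual intersection when the collection is non-empty). -/
def collI {α : Type*} [DecidableEq α] (Γ : Finset (Finset α)) : Finset α :=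
  (Γ.sup id).filter (fun x => ∀ S ∈ Γ, x ∈ S)

/-- `e Γ = |⋃Γ| + |⋂Γ|` as an integer. -/
def collE {α : Type*} [DecidableEq α] (Γ : Finset (Finset α)) : ℤ :=
  (collU Γ).card + (collI Γ).card

/-- `F` is a hereditary König–Egerváry collection with common cardinality `a`. -/
def IsHKE {α : Type*} [DecidableEq α] (F : Finset (Finset α)) (a : ℕ) : Prop :=
  (∀ S ∈ F, S.card = a) ∧
  ∀ Γ ⊆ F, Γ.Nonempty → collE Γ = 2 * (a : ℤ)

/-- A finite set of vertices is independent in `G`. -/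
def IsIndep {V : Type*} (G : SimpleGraph V) (S : Finset V) : Prop :=
  ∀ x ∈ S, ∀ y ∈ S, ¬ G.Adj x y

/-- A maximum independent set of `G`. -/
def IsMaxIndep {V : Type*} (G : SimpleGraph V) (S : Finset V) : Prop :=
  IsIndep G S ∧ ∀ T : Finset V, IsIndep G T → T.card ≤ S.card

/-- A finite set of edges of `G` which is a matching (pairwise non-incident edges). -/
def IsMatchingSet {V : Type*} (G : SimpleGraph V) (M : Finset (Sym2 V)) : Prop :=
  (∀ e ∈ M, e ∈ G.edgeSet) ∧
  ∀ e ∈ M, ∀ f ∈ M, e ≠ f → ∀ v : V, v ∈ e → v ∉ f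

/-!
Write `d(Γ₁, Γ₂) = |⋂Γ₁ − ⋃Γ₂| − |⋂Γ₂ − ⋃Γ₁|`. Moving a set `S` from `Γ₁` to `Γ₂` gives
`d(Γ₁, Γ₂) = d(Γ₁ − S, Γ₂) − d(Γ₁ − S, Γ₂ + S)`, and the first term vanishes since `Γ − {S}` is
hke: `d` is `0` on any two subcollections of a collection on which `|⋃| + |⋂|` is constant.
So `d` only changes sign as sets move across, and the singleton partitions give
`m = |⋃Γ| + |⋂Γ| − 2α = |S − ⋃(Γ − S)| − |⋂(Γ − S) − S|`. This is non-negative because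
`(S ∩ ⋃(Γ − S)) ∪ (⋂(Γ − S) − S)` is independent, hence no larger than the maximum
independent set `S`.
-/

section Collections

variable {α : Type*} [DecidableEq α]

def collSkew (Γ₁ Γ₂ : Finset (Finset α)) : ℤ :=
  #(collI Γ₁ \ collU Γ₂) - #(collI Γ₂ \ collU Γ₁)

lemma mem_collU {Γ : Finset (Finset α)} {x : α} : x ∈ collU Γ ↔ ∃ S ∈ Γ, x ∈ S := by
  simp [collU, mem_sup]

lemma mem_collI {Γ : Finset (Finset α)} (hΓ : Γ.Nonempty) {x : α} :
    x ∈ collI Γ ↔ ∀ S ∈ Γ, x ∈ S := by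
  obtain ⟨S₀, hS₀⟩ := hΓ
  simp only [collI, mem_filter, mem_sup, id_eq]
  exact ⟨And.right, fun h => ⟨⟨S₀, hS₀, h S₀ hS₀⟩, h⟩⟩

lemma collI_subset_collU (Γ : Finset (Finset α)) : collI Γ ⊆ collU Γ :=
  filter_subset _ _

lemma collU_singleton (S : Finset α) : collU {S} = S := by
  simp [collU]

lemma collI_singleton (S : Finset α) : collI {S} = S := by
  ext x
  simp [mem_collI (singleton_nonempty S)]

lemma collU_insert (S : Finset α) (Γ : Finset (Finset α)) :
    collU (insert S Γ) = S ∪ collU Γ := by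
  simp [collU, sup_insert, sup_eq_union]

lemma collI_insert (S : Finset α) {Γ : Finset (Finset α)} (hΓ : Γ.Nonempty) :
    collI (insert S Γ) = S ∩ collI Γ := by
  ext x
  rw [mem_collI (insert_nonempty S Γ), mem_inter, mem_collI hΓ, forall_mem_insert]

lemma collSkew_swap (Γ₁ Γ₂ : Finset (Finset α)) : collSkew Γ₂ Γ₁ = -collSkew Γ₁ Γ₂ := by
  simp only [collSkew]
  ring

lemma collSkew_singleton_left (S : Finset α) {Γ : Finset (Finset α)} (hΓ : Γ.Nonempty) :
    collSkew {S} Γ = collE (insert S Γ) - collE Γ := by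
  have hS := card_sdiff_add_card_inter S (collU Γ)
  have hI := card_sdiff_add_card_inter (collI Γ) S
  have hU := card_union_add_card_inter S (collU Γ)
  simp only [collSkew, collE, collU_singleton, collI_singleton, collU_insert,
    collI_insert S hΓ, inter_comm S (collI Γ)]
  omega

/-- Adding `S` to either side splits both cross differences of `collSkew Γ₁ Γ₂` along `S`. -/
lemma collSkew_insert_left_add_insert_right (S : Finset α) {Γ₁ Γ₂ : Finset (Finset α)}
    (h₁ : Γ₁.Nonempty) (h₂ : Γ₂.Nonempty) :
    collSkew (insert S Γ₁) Γ₂ + collSkew Γ₁ (insert S Γ₂) = collSkew Γ₁ Γ₂ := by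
  unfold collSkew
  set X := collI Γ₁ \ collU Γ₂
  set Y := collI Γ₂ \ collU Γ₁
  have hX := card_inter_add_card_sdiff X S
  have hY := card_inter_add_card_sdiff Y S
  have e₁ : collI (insert S Γ₁) \ collU Γ₂ = X ∩ S := by
    ext; simp only [X, collI_insert S h₁, mem_sdiff, mem_inter]; tauto
  have e₂ : collI Γ₂ \ collU (insert S Γ₁) = Y \ S := by
    ext; simp only [Y, collU_insert, mem_sdiff, mem_union]; tauto
  have e₃ : collI Γ₁ \ collU (insert S Γ₂) = X \ S := by
    ext; simp only [X, collU_insert, mem_sdiff, mem_union]; tauto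
  have e₄ : collI (insert S Γ₂) \ collU Γ₁ = Y ∩ S := by
    ext; simp only [Y, collI_insert S h₂, mem_sdiff, mem_inter]; tauto
  rw [e₁, e₂, e₃, e₄]
  omega

lemma collSkew_eq_zero_of_collE_eq {F : Finset (Finset α)} {c : ℤ}
    (hF : ∀ Γ ⊆ F, Γ.Nonempty → collE Γ = c) {Γ₂ : Finset (Finset α)} (h₂ : Γ₂.Nonempty)
    (hΓ₂ : Γ₂ ⊆ F) : ∀ Γ₁ ⊆ F, Γ₁.Nonempty → collSkew Γ₁ Γ₂ = 0 := by
  induction h₂ using Nonempty.cons_induction with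
  | singleton S =>
    intro Γ₁ hΓ₁ h₁
    have hS : S ∈ F := hΓ₂ (mem_singleton_self S)
    rw [collSkew_swap, collSkew_singleton_left S h₁,
      hF _ (insert_subset hS hΓ₁) (insert_nonempty _ _), hF Γ₁ hΓ₁ h₁, sub_self, neg_zero]
  | cons S Γ₂ hS h₂ ih =>
    intro Γ₁ hΓ₁ h₁
    rw [cons_eq_insert] at hΓ₂ ⊢
    obtain ⟨hSF, hΓ₂F⟩ := insert_subset_iff.mp hΓ₂
    have h := collSkew_insert_left_add_insert_right S h₁ h₂
    rw [ih hΓ₂F Γ₁ hΓ₁ h₁, ih hΓ₂F _ (insert_subset hSF hΓ₁) (insert_nonempty _ _)] at h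
    linarith

lemma collSkew_of_partition {Γ : Finset (Finset α)} {c : ℤ}
    (hΓ : ∀ S ∈ Γ, ∀ Γ' ⊆ Γ.erase S, Γ'.Nonempty → collE Γ' = c)
    {Γ₁ : Finset (Finset α)} (h₁ : Γ₁.Nonempty) :
    ∀ Γ₂ : Finset (Finset α), Γ₁ ∪ Γ₂ = Γ → Disjoint Γ₁ Γ₂ → Γ₂.Nonempty →
      collSkew Γ₁ Γ₂ = (-1) ^ (#Γ₁ + 1) * (collE Γ - c) := by
  induction h₁ using Nonempty.cons_induction with
  | singleton S =>
    intro Γ₂ hU hD h₂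
    have hS : S ∈ Γ := hU ▸ mem_union_left _ (mem_singleton_self S)
    obtain rfl : Γ₂ = Γ.erase S := by
      rw [← hU, ← sdiff_singleton_eq_erase, union_sdiff_cancel_left hD]
    rw [collSkew_singleton_left S h₂, insert_erase hS, hΓ S hS _ subset_rfl h₂, card_singleton]
    ring
  | cons S Γ₁ hS h₁ ih =>
    intro Γ₂ hU hD h₂
    rw [cons_eq_insert] at hU hD ⊢
    rw [card_insert_of_notMem hS]
    obtain ⟨hSΓ₂, hD₁⟩ := disjoint_insert_left.mp hD
    have hSΓ : S ∈ Γ := hU ▸ mem_union_left _ (mem_insert_self S Γ₁)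
    have hsub : Γ₁ ∪ Γ₂ ⊆ Γ.erase S := by
      intro T hT
      refine mem_erase.mpr ⟨?_, hU ▸ mem_union.mpr ?_⟩
      · rintro rfl
        exact (mem_union.mp hT).elim hS hSΓ₂
      · exact (mem_union.mp hT).imp (mem_insert_of_mem ·) id
    have hzero := collSkew_eq_zero_of_collE_eq (hΓ S hSΓ) h₂ (subset_union_right.trans hsub) Γ₁
      (subset_union_left.trans hsub) h₁
    have hmove := ih (insert S Γ₂) (by rw [union_insert, ← insert_union, hU])
      (disjoint_insert_right.mpr ⟨hS, hD₁⟩) (insert_nonempty _ _)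
    have h := collSkew_insert_left_add_insert_right S h₁ h₂
    rw [hzero, hmove] at h
    rw [pow_succ]
    linarith

end Collections

section Graphs

variable {V : Type*} [DecidableEq V] {G : SimpleGraph V}

/-- The exchange set `(S ∩ ⋃Γ) ∪ (⋂Γ − S)` is independent, so it is no larger than `S`. -/
lemma card_collI_sdiff_le_card_sdiff_collU {S : Finset V} (hS : IsMaxIndep G S)
    {Γ : Finset (Finset V)} (hΓ : Γ.Nonempty) (hind : ∀ W ∈ Γ, IsIndep G W) :
    #(collI Γ \ S) ≤ #(S \ collU Γ) := by
  set T := (S ∩ collU Γ) ∪ (collI Γ \ S)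
  have hTU : T ⊆ collU Γ :=
    union_subset inter_subset_right (sdiff_subset.trans (collI_subset_collU Γ))
  have hcross : ∀ x ∈ T, ∀ y ∈ collI Γ \ S, ¬ G.Adj x y := by
    intro x hx y hy
    obtain ⟨W, hW, hxW⟩ := mem_collU.mp (hTU hx)
    exact hind W hW x hxW y ((mem_collI hΓ).mp (mem_sdiff.mp hy).1 W hW)
  have hT : IsIndep G T := by
    intro x hx y hy
    by_cases hyI : y ∈ collI Γ \ S
    · exact hcross x hx y hyI
    by_cases hxI : x ∈ collI Γ \ S
    · exact fun hxy => hcross y hy x hxI hxy.symm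
    have hxS := (mem_inter.mp ((mem_union.mp hx).resolve_right hxI)).1
    have hyS := (mem_inter.mp ((mem_union.mp hy).resolve_right hyI)).1
    exact hS.1 x hxS y hyS
  have hTS := hS.2 T hT
  have hTcard : #T = #(S ∩ collU Γ) + #(collI Γ \ S) :=
    card_union_of_disjoint <| disjoint_left.mpr fun x hx hx' =>
      (mem_sdiff.mp hx').2 (mem_inter.mp hx).1
  have hSsplit := card_inter_add_card_sdiff S (collU Γ)
  omega

end Graphs

theorem stmt_10_general {V : Type*} [DecidableEq V] (G : SimpleGraph V)
    (Γ : Finset (Finset V)) (hcard : 2 ≤ Γ.card) (a : ℕ)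
    (hΩ : ∀ S ∈ Γ, IsMaxIndep G S)
    (hhke : ∀ S ∈ Γ, IsHKE (Γ.erase S) a) :
    ∃ m : ℤ, 0 ≤ m ∧ ∀ Γ₁ Γ₂ : Finset (Finset V),
      Γ₁ ∪ Γ₂ = Γ → Disjoint Γ₁ Γ₂ → Γ₁.Nonempty → Γ₂.Nonempty →
      ((collI Γ₁ \ collU Γ₂).card : ℤ) - ((collI Γ₂ \ collU Γ₁).card : ℤ)
        = (-1) ^ (Γ₁.card + 1) * m := by
  have hE : ∀ S ∈ Γ, ∀ Γ' ⊆ Γ.erase S, Γ'.Nonempty → collE Γ' = 2 * (a : ℤ) :=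
    fun S hS => (hhke S hS).2
  refine ⟨collE Γ - 2 * a, ?_, fun Γ₁ Γ₂ hU hD h₁ h₂ => collSkew_of_partition hE h₁ Γ₂ hU hD h₂⟩
  obtain ⟨S, hS⟩ : Γ.Nonempty := card_pos.mp (by omega)
  have hrest : (Γ.erase S).Nonempty := by
    rw [← card_pos, card_erase_of_mem hS]
    omega
  have hskew := collSkew_singleton_left S hrest
  rw [insert_erase hS, hE S hS _ subset_rfl hrest] at hskew
  have hle := card_collI_sdiff_le_card_sdiff_collU (hΩ S hS) hrest
    fun W hW => (hΩ W (mem_of_mem_erase hW)).1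
  simp only [collSkew, collI_singleton, collU_singleton] at hskew
  omega

theorem stmt_10 {V : Type*} [Fintype V] [DecidableEq V] (G : SimpleGraph V)
    (Γ : Finset (Finset V)) (hcard : 2 ≤ Γ.card) (a : ℕ) (ha : 0 < a)
    (hΩ : ∀ S ∈ Γ, IsMaxIndep G S)
    (hhke : ∀ S ∈ Γ, IsHKE (Γ.erase S) a) :
    ∃ m : ℤ, 0 ≤ m ∧ ∀ Γ₁ Γ₂ : Finset (Finset V),
      Γ₁ ∪ Γ₂ = Γ → Disjoint Γ₁ Γ₂ → Γ₁.Nonempty → Γ₂.Nonempty →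
      ((collI Γ₁ \ collU Γ₂).card : ℤ) - ((collI Γ₂ \ collU Γ₁).card : ℤ)
        = (-1) ^ (Γ₁.card + 1) * m :=
  stmt_10_general G Γ hcard a hΩ hhke
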